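/- arXiv:1611.09062 — 3 statements merged into one kernel-verified Lean document; each statement's English description precedes it below -/
import Mathlib

section
/- Let $M$ be a convex set of equivalent probability measures on a measurable space with filtration $(\mathcal{F}_m)_{m\ge 0}$, $\mathcal{F}_0$ trivial, such that the Radon–Nikodym derivative of any measure in $M$ with respect to any other lies in $[l, L]$ with $0 < l \le L < \infty$. Let $(f_m)$ be a supermartingale with respect to every measure in $M$. Suppose for some $P_1 \in M$, some $m_0 \ge 1$, and some nonnegative $\mathcal{F}_{m_0-1}$-measurable random variable $\varphi$ with $P_1(\varphi > 0) > 0$, we have $f_{m_0-1} - E^{P_1}[f_{m_0} \mid \mathcal{F}_{m_0-1}] \ge \varphi$ a.s. Then for every measure $Q = (1-\alpha)P_1 + \alpha P_2$ with $P_2 \in M$ and $0 \le \alpha \le L/(1+L)$, we have $f_{m_0-1} - E^{Q}[f_{m_0} \mid \mathcal{F}_{m_0-1}] \ge \frac{l}{1+L}\varphi$ a.s. -/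
/-!
Write `Q = (1-α) P₁ + α P₂`. Since `Q ∈ M`, the density of `P₁` with respect to `Q` is at least
`l`, so `l • Q ≤ P₁`. Over an `ℱ n`-measurable set `s`, the drop `∫_s f n - ∫_s f (n+1)` under
`Q` is `(1-α)` times the drop under `P₁`, which is at least `∫_s φ dP₁ ≥ l ∫_s φ dQ`, plus `α`
times the drop under `P₂`, which is nonnegative. As `1 - α ≥ 1/(1+L)`, the drop under `Q` over
every such `s` is at least `l/(1+L) ∫_s φ dQ`, and these set integrals determine the conditional
drop `f n - Q[f (n+1) | ℱ n]`.
-/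

open MeasureTheory

namespace MeasureTheory

variable {Ω : Type*} {m m0 : MeasurableSpace Ω} {μ ν : Measure Ω}

theorem Measure.smul_le_of_le_rnDeriv [μ.HaveLebesgueDecomposition ν] {c : ENNReal}
    (h : ∀ᵐ ω ∂ν, c ≤ μ.rnDeriv ν ω) : c • ν ≤ μ :=
  calc c • ν = ν.withDensity fun _ => c := (withDensity_const c).symm
    _ ≤ ν.withDensity (μ.rnDeriv ν) := withDensity_mono h
    _ ≤ μ := Measure.withDensity_rnDeriv_le μ ν

theorem Integrable.of_smul_measure_le {E : Type*} [NormedAddCommGroup E] {f : Ω → E} {c : ENNReal} (hc : c ≠ 0) (hc' : c ≠ ⊤)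
    (hle : c • μ ≤ ν) (hf : Integrable f ν) : Integrable f μ :=
  (integrable_smul_measure hc hc').1 (hf.mono_measure hle)

theorem mul_integral_le_of_smul_le {f : Ω → ℝ} {c : ℝ} (hc : 0 ≤ c)
    (hle : ENNReal.ofReal c • μ ≤ ν) (hf : 0 ≤ᵐ[ν] f) (hfi : Integrable f ν) :
    c * ∫ ω, f ω ∂μ ≤ ∫ ω, f ω ∂ν := by
  simpa [integral_smul_measure, ENNReal.toReal_ofReal hc] using integral_mono_measure hle hf hfi

theorem setIntegral_ofReal_smul_add_ofReal_smul {f : Ω → ℝ} {a b : ℝ} (ha : 0 ≤ a) (hb : 0 ≤ b)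
    (hμ : Integrable f μ) (hν : Integrable f ν) (s : Set Ω) :
    ∫ ω in s, f ω ∂(ENNReal.ofReal a • μ + ENNReal.ofReal b • ν) =
      a * ∫ ω in s, f ω ∂μ + b * ∫ ω in s, f ω ∂ν := by
  rw [Measure.restrict_add, Measure.restrict_smul, Measure.restrict_smul,
    integral_add_measure (hμ.integrableOn.smul_measure ENNReal.ofReal_ne_top)
      (hν.integrableOn.smul_measure ENNReal.ofReal_ne_top),
    integral_smul_measure, integral_smul_measure, ENNReal.toReal_ofReal ha,
    ENNReal.toReal_ofReal hb, smul_eq_mul, smul_eq_mul]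

theorem ae_le_of_forall_setIntegral_le_of_stronglyMeasurable (hm : m ≤ m0) {f g : Ω → ℝ}
    (hf : StronglyMeasurable[m] f) (hg : StronglyMeasurable[m] g)
    (hfi : Integrable f μ) (hgi : Integrable g μ)
    (hle : ∀ s, MeasurableSet[m] s → ∫ ω in s, f ω ∂μ ≤ ∫ ω in s, g ω ∂μ) : f ≤ᵐ[μ] g := by
  refine ae_le_of_ae_le_trim (hm := hm) <|
    ae_le_of_forall_setIntegral_le (hfi.trim hm hf) (hgi.trim hm hg) fun s hs _ => ?_
  rw [← setIntegral_trim hm hf hs, ← setIntegral_trim hm hg hs]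
  exact hle s hs

theorem ae_le_sub_condExp_iff (hm : m ≤ m0) [SigmaFinite (μ.trim hm)] {φ g h : Ω → ℝ}
    (hφ : StronglyMeasurable[m] φ) (hg : StronglyMeasurable[m] g)
    (hφi : Integrable φ μ) (hgi : Integrable g μ) (hhi : Integrable h μ) :
    φ ≤ᵐ[μ] g - μ[h | m] ↔
      ∀ s, MeasurableSet[m] s → ∫ ω in s, φ ω ∂μ ≤ ∫ ω in s, g ω ∂μ - ∫ ω in s, h ω ∂μ := by
  have hdrop : ∀ s, MeasurableSet[m] s →
      ∫ ω in s, (g - μ[h | m]) ω ∂μ = ∫ ω in s, g ω ∂μ - ∫ ω in s, h ω ∂μ := fun s hs => by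
    rw [Pi.sub_def, integral_sub hgi.integrableOn integrable_condExp.integrableOn,
      setIntegral_condExp hm hhi hs]
  constructor
  · intro hle s hs
    rw [← hdrop s hs]
    exact setIntegral_mono_ae hφi.integrableOn (hgi.sub integrable_condExp).integrableOn hle
  · intro hle
    refine ae_le_of_forall_setIntegral_le_of_stronglyMeasurable hm hφ
      (hg.sub stronglyMeasurable_condExp) hφi (hgi.sub integrable_condExp) fun s hs => ?_
    rw [hdrop s hs]
    exact hle s hs

theorem Supermartingale.mul_le_sub_condExp_of_mixture {ℱ : Filtration ℕ m0} {f : ℕ → Ω → ℝ}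
    {P₁ P₂ : Measure Ω} {α l c : ℝ} {n : ℕ} {φ : Ω → ℝ}
    [IsFiniteMeasure P₁] [IsFiniteMeasure P₂]
    [IsFiniteMeasure (ENNReal.ofReal (1 - α) • P₁ + ENNReal.ofReal α • P₂)]
    (h₁ : Supermartingale f ℱ P₁) (h₂ : Supermartingale f ℱ P₂)
    (hQ : Supermartingale f ℱ (ENNReal.ofReal (1 - α) • P₁ + ENNReal.ofReal α • P₂))
    (hα0 : 0 ≤ α) (hα1 : α ≤ 1) (hl : 0 < l) (hc : c ≤ (1 - α) * l)
    (hlQ : ENNReal.ofReal l • (ENNReal.ofReal (1 - α) • P₁ + ENNReal.ofReal α • P₂) ≤ P₁)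
    (hφmeas : StronglyMeasurable[ℱ n] φ) (hφ0 : ∀ ω, 0 ≤ φ ω)
    (hineq : ∀ᵐ ω ∂P₁, φ ω ≤ f n ω - (P₁[f (n + 1) | ℱ n]) ω) :
    ∀ᵐ ω ∂(ENNReal.ofReal (1 - α) • P₁ + ENNReal.ofReal α • P₂),
      c * φ ω ≤ f n ω - ((ENNReal.ofReal (1 - α) • P₁ + ENNReal.ofReal α • P₂)[f (n + 1) | ℱ n]) ω := by
  set Q := ENNReal.ofReal (1 - α) • P₁ + ENNReal.ofReal α • P₂
  have hφP₁ : Integrable φ P₁ :=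
    integrable_of_le_of_le (hφmeas.mono (ℱ.le n)).aestronglyMeasurable (ae_of_all _ hφ0) hineq
      (integrable_zero _ _ _) ((h₁.integrable n).sub integrable_condExp)
  have hφQ : Integrable φ Q :=
    hφP₁.of_smul_measure_le (by simpa using hl) ENNReal.ofReal_ne_top hlQ
  have hdrop₁ := (ae_le_sub_condExp_iff (ℱ.le n) hφmeas (h₁.stronglyAdapted n) hφP₁
    (h₁.integrable n) (h₁.integrable (n + 1))).1 hineq
  refine (ae_le_sub_condExp_iff (ℱ.le n) (hφmeas.const_mul _) (hQ.stronglyAdapted n)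
    (hφQ.const_mul _) (hQ.integrable n) (hQ.integrable (n + 1))).2 fun s hs => ?_
  have hlQs : ENNReal.ofReal l • Q.restrict s ≤ P₁.restrict s := by
    rw [← Measure.restrict_smul]
    exact Measure.restrict_mono subset_rfl hlQ
  have hφs : l * ∫ ω in s, φ ω ∂Q ≤ ∫ ω in s, φ ω ∂P₁ :=
    mul_integral_le_of_smul_le hl.le hlQs (ae_of_all _ hφ0) hφP₁.integrableOn
  have hdrop₂ := h₂.setIntegral_le (Nat.le_succ n) hs
  have hΦQ : 0 ≤ ∫ ω in s, φ ω ∂Q := integral_nonneg hφ0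
  rw [integral_const_mul, setIntegral_ofReal_smul_add_ofReal_smul (by linarith) hα0
      (h₁.integrable n) (h₂.integrable n),
    setIntegral_ofReal_smul_add_ofReal_smul (by linarith) hα0
      (h₁.integrable (n + 1)) (h₂.integrable (n + 1))]
  calc c * ∫ ω in s, φ ω ∂Q ≤ (1 - α) * (l * ∫ ω in s, φ ω ∂Q) := by
        rw [← mul_assoc]; exact mul_le_mul_of_nonneg_right hc hΦQ
    _ ≤ (1 - α) * (∫ ω in s, f n ω ∂P₁ - ∫ ω in s, f (n + 1) ω ∂P₁) :=
      mul_le_mul_of_nonneg_left (hφs.trans (hdrop₁ s hs)) (by linarith)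
    _ ≤ _ := by nlinarith [mul_nonneg hα0 (sub_nonneg.2 hdrop₂)]

end MeasureTheory

theorem stmt0_general
    {Ω : Type*} {m0 : MeasurableSpace Ω} (ℱ : Filtration ℕ m0)
    (M : Set (Measure Ω))
    (hprob : ∀ P ∈ M, IsProbabilityMeasure P)
    (hconvex : ∀ P ∈ M, ∀ Q ∈ M, ∀ α : ℝ, 0 ≤ α → α ≤ 1 →
      (ENNReal.ofReal (1 - α)) • P + (ENNReal.ofReal α) • Q ∈ M)
    (l L : ℝ) (hl : 0 < l) (hlL : l ≤ L)
    (hrn : ∀ P ∈ M, ∀ Q ∈ M, ∀ᵐ ω ∂Q,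
      ENNReal.ofReal l ≤ P.rnDeriv Q ω ∧ P.rnDeriv Q ω ≤ ENNReal.ofReal L)
    (f : ℕ → Ω → ℝ)
    (hsup : ∀ P ∈ M, Supermartingale f ℱ P)
    (P₁ : Measure Ω) (hP₁ : P₁ ∈ M)
    (n : ℕ) (φ : Ω → ℝ)
    (hφmeas : StronglyMeasurable[ℱ n] φ)
    (hφ0 : ∀ ω, 0 ≤ φ ω)
    (hineq : ∀ᵐ ω ∂P₁, φ ω ≤ f n ω - (P₁[f (n + 1) | ℱ n]) ω) :
    ∀ P₂ ∈ M, ∀ α : ℝ, 0 ≤ α → α ≤ L / (1 + L) →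
      ∀ᵐ ω ∂((ENNReal.ofReal (1 - α)) • P₁ + (ENNReal.ofReal α) • P₂),
        (l / (1 + L)) * φ ω ≤
          f n ω -
            (((ENNReal.ofReal (1 - α)) • P₁ + (ENNReal.ofReal α) • P₂)[f (n + 1) | ℱ n]) ω := by
  intro P₂ hP₂ α hα0 hαL
  have h1L : 0 < 1 + L := by linarith
  have hα : 1 / (1 + L) ≤ 1 - α := by
    have : L / (1 + L) = 1 - 1 / (1 + L) := by field_simp; ring
    linarith
  have hα1 : α ≤ 1 := by linarith [(by positivity : (0 : ℝ) ≤ 1 / (1 + L))]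
  have hQM := hconvex P₁ hP₁ P₂ hP₂ α hα0 hα1
  have := hprob P₁ hP₁
  have := hprob P₂ hP₂
  have := hprob _ hQM
  refine (hsup P₁ hP₁).mul_le_sub_condExp_of_mixture (hsup P₂ hP₂) (hsup _ hQM) hα0 hα1 hl ?_
    (Measure.smul_le_of_le_rnDeriv ((hrn P₁ hP₁ _ hQM).mono fun _ h => h.1)) hφmeas hφ0 hineq
  calc l / (1 + L) = 1 / (1 + L) * l := by ring
    _ ≤ (1 - α) * l := mul_le_mul_of_nonneg_right hα hl.le

/-- For a supermartingale relative to a convex set of equivalent measures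
with Radon–Nikodym derivatives bounded in `[l, L]`, a drop of size `φ` at time `m₀` under
`P₁` implies a drop of size `(l/(1+L))·φ` under every mixture `(1-α)P₁ + αP₂`
with `0 ≤ α ≤ L/(1+L)`. -/
theorem stmt0
    {Ω : Type*} {m0 : MeasurableSpace Ω} (ℱ : Filtration ℕ m0)
    (M : Set (Measure Ω))
    (hprob : ∀ P ∈ M, IsProbabilityMeasure P)
    (hconvex : ∀ P ∈ M, ∀ Q ∈ M, ∀ α : ℝ, 0 ≤ α → α ≤ 1 →
      (ENNReal.ofReal (1 - α)) • P + (ENNReal.ofReal α) • Q ∈ M)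
    (l L : ℝ) (hl : 0 < l) (hlL : l ≤ L)
    (hrn : ∀ P ∈ M, ∀ Q ∈ M, ∀ᵐ ω ∂Q,
      ENNReal.ofReal l ≤ P.rnDeriv Q ω ∧ P.rnDeriv Q ω ≤ ENNReal.ofReal L)
    (f : ℕ → Ω → ℝ)
    (hsup : ∀ P ∈ M, Supermartingale f ℱ P)
    (P₁ : Measure Ω) (hP₁ : P₁ ∈ M)
    (n : ℕ) (φ : Ω → ℝ)
    (hφmeas : StronglyMeasurable[ℱ n] φ)
    (hφ0 : ∀ ω, 0 ≤ φ ω)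
    (hφpos : 0 < P₁ {ω | 0 < φ ω})
    (hineq : ∀ᵐ ω ∂P₁, φ ω ≤ f n ω - (P₁[f (n + 1) | ℱ n]) ω) :
    ∀ P₂ ∈ M, ∀ α : ℝ, 0 ≤ α → α ≤ L / (1 + L) →
      ∀ᵐ ω ∂((ENNReal.ofReal (1 - α)) • P₁ + (ENNReal.ofReal α) • P₂),
        (l / (1 + L)) * φ ω ≤
          f n ω -
            (((ENNReal.ofReal (1 - α)) • P₁ + (ENNReal.ofReal α) • P₂)[f (n + 1) | ℱ n]) ω :=
  stmt0_general ℱ M hprob hconvex l L hl hlL hrn f hsup P₁ hP₁ n φ hφmeas hφ0 hineq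
end

section
/- Let $M$ be a convex set of equivalent probability measures on $(\Omega, \mathcal{F})$ with filtration $(\mathcal{F}_m)$, and let $(f_m)_{m \ge 0}$ be a nonnegative supermartingale with respect to every $P \in M$, with $\sup_{P \in M} E^P f_m < \infty$. Suppose there exists for each $m \ge 1$ an $\mathcal{F}_m$-measurable random variable $\xi_m^0 \ge 0$ with $E^P[\xi_m^0 \mid \mathcal{F}_{m-1}] = 1$ a.s. for all $P \in M$, and such that $f_m \le f_{m-1} \xi_m^0$ a.s. Then $f$ admits an optional decomposition: setting $g_m = f_{m-1}\xi_m^0 - f_m \ge 0$, the process $N_m = f_0 + \sum_{i=1}^m f_{i-1}(\xi_i^0 - 1)$ is a martingale with respect to every $P \in M$ and $f_m = N_m - \sum_{i=1}^m g_i$. -/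
/-!
If `E^P[ξ | m] = 1` with `ξ ≥ 0`, then the measure `ξ • P` agrees with `P` on `m`, so for every
`m`-measurable integrable `g` the product `g ξ` is `P`-integrable and `E^P[g ξ | m] = g`.
Applied to `g = f_i` and `ξ = ξ_{i+1}`, this says the increments `f_i (ξ_{i+1} - 1)` of `N` have
zero conditional expectation, so `N` is a martingale under every `P ∈ M`. The identity
`f = N - ∑ g_i` telescopes, and `g_i ≥ 0` is the domination `f_{i+1} ≤ f_i ξ_{i+1}`.
-/

open MeasureTheory

section
variable {Ω : Type*} {m m0 : MeasurableSpace Ω} {P : Measure Ω} {ξ : Ω → ℝ}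

lemma integrable_of_condExp_ae_eq_one [NeZero P] (h : P[ξ|m] =ᵐ[P] 1) : Integrable ξ P := by
  by_contra hξ
  rw [condExp_of_not_integrable hξ] at h
  obtain ⟨ω, hω⟩ := h.exists
  exact zero_ne_one hω

lemma trim_withDensity_ofReal_of_condExp_ae_eq_one (hm : m ≤ m0) [SigmaFinite (P.trim hm)]
    (hξ : Integrable ξ P) (hξ0 : 0 ≤ᵐ[P] ξ) (h : P[ξ|m] =ᵐ[P] 1) :
    (P.withDensity fun ω => ENNReal.ofReal (ξ ω)).trim hm = P.trim hm := by
  refine @Measure.ext _ m _ _ fun s hs => ?_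
  rw [trim_measurableSet_eq hm hs, trim_measurableSet_eq hm hs, withDensity_apply _ (hm s hs),
    ← setLIntegral_condLExp (hm := hm) P _ hs, ← setLIntegral_one]
  refine setLIntegral_congr_fun_ae (hm s hs) ?_
  filter_upwards [condLExp_ofReal m hξ hξ0, h] with ω hω h1 _
  rw [hω, h1, Pi.one_apply, ENNReal.ofReal_one]

lemma lintegral_mul_ofReal_of_condExp_ae_eq_one (hm : m ≤ m0) [SigmaFinite (P.trim hm)]
    (hξ : Integrable ξ P) (hξ0 : 0 ≤ᵐ[P] ξ) (h : P[ξ|m] =ᵐ[P] 1)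
    {F : Ω → ENNReal} (hF : Measurable[m] F) :
    ∫⁻ ω, F ω * ENNReal.ofReal (ξ ω) ∂P = ∫⁻ ω, F ω ∂P := by
  rw [← lintegral_trim hm hF, ← trim_withDensity_ofReal_of_condExp_ae_eq_one hm hξ hξ0 h,
    lintegral_trim hm hF, lintegral_withDensity_eq_lintegral_mul₀ hξ.1.aemeasurable.ennreal_ofReal
      (hF.mono hm le_rfl).aemeasurable]
  simp only [Pi.mul_apply, mul_comm]

lemma integrable_mul_of_condExp_ae_eq_one (hm : m ≤ m0) [SigmaFinite (P.trim hm)]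
    (hξ : Integrable ξ P) (hξ0 : 0 ≤ᵐ[P] ξ) (h : P[ξ|m] =ᵐ[P] 1)
    {g : Ω → ℝ} (hg : StronglyMeasurable[m] g) (hgi : Integrable g P) :
    Integrable (g * ξ) P := by
  refine ⟨(hg.mono hm).aestronglyMeasurable.mul hξ.1, ?_⟩
  rw [hasFiniteIntegral_iff_enorm]
  calc ∫⁻ ω, ‖(g * ξ) ω‖ₑ ∂P = ∫⁻ ω, ‖g ω‖ₑ * ENNReal.ofReal (ξ ω) ∂P := by
        refine lintegral_congr_ae ?_
        filter_upwards [hξ0] with ω hω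
        rw [Pi.mul_apply, enorm_mul, Real.enorm_eq_ofReal hω]
    _ = ∫⁻ ω, ‖g ω‖ₑ ∂P :=
        lintegral_mul_ofReal_of_condExp_ae_eq_one hm hξ hξ0 h hg.enorm
    _ < ⊤ := hgi.2

lemma condExp_mul_ae_eq_of_condExp_ae_eq_one (hm : m ≤ m0) [SigmaFinite (P.trim hm)]
    (hξ : Integrable ξ P) (hξ0 : 0 ≤ᵐ[P] ξ) (h : P[ξ|m] =ᵐ[P] 1)
    {g : Ω → ℝ} (hg : StronglyMeasurable[m] g) (hgi : Integrable g P) :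
    P[g * ξ|m] =ᵐ[P] g := by
  filter_upwards [condExp_mul_of_stronglyMeasurable_left hg
    (integrable_mul_of_condExp_ae_eq_one hm hξ hξ0 h hg hgi) hξ, h] with ω hpull h1
  rw [hpull, Pi.mul_apply, h1, Pi.one_apply, mul_one]

end

theorem martingale_add_sum_mul_sub_one {Ω : Type*} {m0 : MeasurableSpace Ω} {P : Measure Ω}
    [IsFiniteMeasure P] [NeZero P] {ℱ : Filtration ℕ m0} {f ξ : ℕ → Ω → ℝ}
    (hf : StronglyAdapted ℱ f) (hfi : ∀ i, Integrable (f i) P)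
    (hξ0 : ∀ i, 0 ≤ᵐ[P] ξ (i + 1)) (hξm : ∀ i, StronglyMeasurable[ℱ (i + 1)] (ξ (i + 1)))
    (hξ : ∀ i, P[ξ (i + 1)|ℱ i] =ᵐ[P] 1) :
    Martingale (fun m ω => f 0 ω + ∑ i ∈ Finset.range m, f i ω * (ξ (i + 1) ω - 1)) ℱ P := by
  have hξi i : Integrable (ξ (i + 1)) P := integrable_of_condExp_ae_eq_one (hξ i)
  have hfξi i : Integrable (f i * ξ (i + 1)) P :=
    integrable_mul_of_condExp_ae_eq_one (ℱ.le i) (hξi i) (hξ0 i) (hξ i) (hf i) (hfi i)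
  have hincr_eq i : f i * (ξ (i + 1) - 1) = f i * ξ (i + 1) - f i := by ring
  refine martingale_of_condExp_sub_eq_zero_nat (fun m => ?_) (fun m => ?_) (fun n => ?_)
  · refine ((hf 0).mono (ℱ.mono m.zero_le)).add
      (Finset.stronglyMeasurable_fun_sum _ fun i hi => ?_)
    have hi : i + 1 ≤ m := Finset.mem_range.mp hi
    exact ((hf i).mono (ℱ.mono (by omega))).mul (((hξm i).mono (ℱ.mono hi)).sub
      stronglyMeasurable_const)
  · refine (hfi 0).add (integrable_finsetSum _ fun i _ => ?_)
    have hincr := (hfξi i).sub (hfi i)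
    rwa [← hincr_eq] at hincr
  · have hstep : (fun ω => f 0 ω + ∑ i ∈ Finset.range (n + 1), f i ω * (ξ (i + 1) ω - 1)) -
        (fun ω => f 0 ω + ∑ i ∈ Finset.range n, f i ω * (ξ (i + 1) ω - 1)) =
        f n * ξ (n + 1) - f n := by
      funext ω
      simp only [Pi.sub_apply, Pi.mul_apply, Finset.sum_range_succ]
      ring
    rw [hstep]
    filter_upwards [condExp_sub (m := ℱ n) (hfξi n) (hfi n),
      condExp_mul_ae_eq_of_condExp_ae_eq_one (ℱ.le n) (hξi n) (hξ0 n) (hξ n) (hf n) (hfi n)]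
      with ω hsub hpull
    rw [hsub, Pi.sub_apply, hpull, condExp_of_stronglyMeasurable (ℱ.le n) (hf n) (hfi n),
      sub_self, Pi.zero_apply]

theorem add_sum_mul_sub_one_sub_sum_mul_sub (f ξ : ℕ → ℝ) (m : ℕ) :
    f 0 + ∑ i ∈ Finset.range m, f i * (ξ (i + 1) - 1) -
      ∑ i ∈ Finset.range m, (f i * ξ (i + 1) - f (i + 1)) = f m := by
  rw [add_sub_assoc, ← Finset.sum_sub_distrib]
  have hsummand i : f i * (ξ (i + 1) - 1) - (f i * ξ (i + 1) - f (i + 1)) = f (i + 1) - f i := by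
    ring
  simp only [hsummand, Finset.sum_range_sub]
  ring

theorem stmt10_general
    {Ω : Type*} {m0 : MeasurableSpace Ω} (ℱ : Filtration ℕ m0)
    (M : Set (Measure Ω))
    (hprob : ∀ P ∈ M, IsProbabilityMeasure P)
    (f : ℕ → Ω → ℝ)
    (hsup : ∀ P ∈ M, Supermartingale f ℱ P)
    (ξ : ℕ → Ω → ℝ)
    (hξ0 : ∀ m ω, 0 ≤ ξ (m + 1) ω)
    (hξmeas : ∀ m : ℕ, StronglyMeasurable[ℱ (m + 1)] (ξ (m + 1)))
    (hξexp : ∀ P ∈ M, ∀ m : ℕ, P[ξ (m + 1) | ℱ m] =ᵐ[P] fun _ => (1 : ℝ))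
    (hdom : ∀ P ∈ M, ∀ m : ℕ, ∀ᵐ ω ∂P, f (m + 1) ω ≤ f m ω * ξ (m + 1) ω) :
    (∀ P ∈ M,
      Martingale
        (fun m ω => f 0 ω + ∑ i ∈ Finset.range m, f i ω * (ξ (i + 1) ω - 1)) ℱ P) ∧
    (∀ P ∈ M, ∀ m : ℕ, ∀ᵐ ω ∂P, 0 ≤ f m ω * ξ (m + 1) ω - f (m + 1) ω) ∧
    (∀ m : ℕ, ∀ ω,
      f m ω =
        (f 0 ω + ∑ i ∈ Finset.range m, f i ω * (ξ (i + 1) ω - 1)) -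
          ∑ i ∈ Finset.range m, (f i ω * ξ (i + 1) ω - f (i + 1) ω)) := by
  refine ⟨fun P hP => ?_, fun P hP m => ?_, fun m ω => ?_⟩
  · have := hprob P hP
    exact martingale_add_sum_mul_sub_one (hsup P hP).stronglyAdapted (hsup P hP).integrable
      (fun i => ae_of_all _ (hξ0 i)) hξmeas (hξexp P hP)
  · filter_upwards [hdom P hP m] with ω h
    exact sub_nonneg.mpr h
  · exact (add_sum_mul_sub_one_sub_sum_mul_sub (f · ω) (ξ · ω) m).symm

/-- If a nonnegative supermartingale `f` relative to a convex set `M` of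
equivalent measures admits for each `m ≥ 1` a nonnegative `ℱ m`-measurable `ξ⁰_m` with
`E^P[ξ⁰_m | ℱ_{m-1}] = 1` for all `P ∈ M` and `f_m ≤ f_{m-1} ξ⁰_m` a.s., then
`N_m = f_0 + ∑_{i=1}^m f_{i-1}(ξ⁰_i - 1)` is a martingale relative to every `P ∈ M`,
and `f_m = N_m - ∑_{i=1}^m g_i` with nonnegative increments `g_i = f_{i-1}ξ⁰_i - f_i`
(an optional decomposition). -/
theorem stmt10
    {Ω : Type*} {m0 : MeasurableSpace Ω} (ℱ : Filtration ℕ m0)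
    (M : Set (Measure Ω))
    (hprob : ∀ P ∈ M, IsProbabilityMeasure P)
    (hconvex : ∀ P ∈ M, ∀ Q ∈ M, ∀ α : ℝ, 0 ≤ α → α ≤ 1 →
      (ENNReal.ofReal (1 - α)) • P + (ENNReal.ofReal α) • Q ∈ M)
    (hequiv : ∀ P ∈ M, ∀ Q ∈ M, P ≪ Q)
    (f : ℕ → Ω → ℝ) (hf0 : ∀ m ω, 0 ≤ f m ω)
    (hsup : ∀ P ∈ M, Supermartingale f ℱ P)
    (hbdd : ∀ m : ℕ, ∃ C : ℝ, ∀ P ∈ M, ∫ ω, f m ω ∂P ≤ C)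
    (ξ : ℕ → Ω → ℝ)
    (hξ0 : ∀ m ω, 0 ≤ ξ (m + 1) ω)
    (hξmeas : ∀ m : ℕ, StronglyMeasurable[ℱ (m + 1)] (ξ (m + 1)))
    (hξexp : ∀ P ∈ M, ∀ m : ℕ, P[ξ (m + 1) | ℱ m] =ᵐ[P] fun _ => (1 : ℝ))
    (hdom : ∀ P ∈ M, ∀ m : ℕ, ∀ᵐ ω ∂P, f (m + 1) ω ≤ f m ω * ξ (m + 1) ω) :
    (∀ P ∈ M,
      Martingale
        (fun m ω => f 0 ω + ∑ i ∈ Finset.range m, f i ω * (ξ (i + 1) ω - 1)) ℱ P) ∧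
    (∀ P ∈ M, ∀ m : ℕ, ∀ᵐ ω ∂P, 0 ≤ f m ω * ξ (m + 1) ω - f (m + 1) ω) ∧
    (∀ m : ℕ, ∀ ω,
      f m ω =
        (f 0 ω + ∑ i ∈ Finset.range m, f i ω * (ξ (i + 1) ω - 1)) -
          ∑ i ∈ Finset.range m, (f i ω * ξ (i + 1) ω - f (i + 1) ω)) :=
  stmt10_general ℱ M hprob f hsup ξ hξ0 hξmeas hξexp hdom
end

section
/- The set $K_N^1 = \{\sum_{k=1}^N \langle H_k, S_k - S_{k-1}\rangle : H \text{ predictable, finite-valued}\}$ of outcomes of discrete-time stochastic integrals against an $\mathbb{R}^d$-valued adapted process $S$ admitting an equivalent martingale measure is closed in the space $L^0$ of finite random variables with respect to convergence in probability. -/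
/-!
Induct on the number of periods and, for a fixed number of periods, on the set of assets that
the approximating strategies may hold in the first period; after passing to a subsequence, the
gains converge almost surely. Where the first positions `G n (m + 1) ω` do not tend to
infinity, a measurably chosen random subsequence of them converges (the Kabanov–Stricker
selection), and the later periods are handled by the induction on time. Where they do tend to
infinity, normalising them and applying the same selection produces a strategy `Z` with zero
gain whose first position is nonzero. On the piece where asset `i` is the first asset with a
nonzero position in `Z`, subtracting suitable multiples of `Z` leaves the gains unchanged and
removes asset `i` from the first period.
-/

open MeasureTheory Filter Topology

section RandomSubsequence

variable {Ω : Type*} {mΩ : MeasurableSpace Ω}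

/-- `leastSeq p 0 = 0` is only a seed; where no candidate exists, `sInf ∅ = 0` is taken. -/
noncomputable def leastSeq (p : ℕ → ℕ → ℕ → Prop) : ℕ → ℕ
  | 0 => 0
  | k + 1 => sInf {i | p k (leastSeq p k) i}

theorem measurable_nat_sInf {p : Ω → ℕ → Prop} (hp : ∀ i, Measurable (p · i)) :
    Measurable fun ω => sInf {i | p ω i} := by
  classical
  have hex : ∀ ω, ∃ i, p ω i ∨ ∀ j, ¬ p ω j := fun ω => by
    by_cases h : ∃ i, p ω i
    · exact h.imp fun _ => Or.inl
    · exact ⟨0, Or.inr (not_exists.1 h)⟩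
  convert measurable_find hex fun i => measurableSet_setOfPred.2 (by fun_prop) using 2 with ω
  by_cases h : ∃ i, p ω i
  · rw [Nat.sInf_def (s := {i | p ω i}) h]
    exact Nat.find_congr' ⟨Or.inl, fun h' => h'.resolve_right (not_forall_not.2 h)⟩
  · rw [not_exists] at h
    have hempty : {i | p ω i} = ∅ := Set.eq_empty_of_forall_notMem h
    rw [hempty, Nat.sInf_empty]
    exact ((Nat.find_eq_zero _).2 (Or.inr h)).symm

theorem leastSeq_spec {p : ℕ → ℕ → ℕ → Prop} {k : ℕ} (h : ∃ i, p k (leastSeq p k) i) :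
    p k (leastSeq p k) (leastSeq p (k + 1)) :=
  Nat.sInf_mem h

theorem measurable_leastSeq {p : Ω → ℕ → ℕ → ℕ → Prop}
    (hp : ∀ k j i, Measurable (p · k j i)) (k : ℕ) :
    Measurable fun ω => leastSeq (p ω) k := by
  induction k with
  | zero => exact measurable_const
  | succ k ih =>
    have hstep : Measurable fun q : Ω × ℕ => sInf {i | p q.1 k q.2 i} :=
      measurable_from_prod_countable_left fun j => measurable_nat_sInf fun i => hp k j i
    exact hstep.comp (measurable_id.prodMk ih)

theorem measurable_apply_index {β : Type*} [MeasurableSpace β] {u : ℕ → Ω → β}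
    (hu : ∀ n, Measurable (u n)) {τ : Ω → ℕ} (hτ : Measurable τ) :
    Measurable fun ω => u (τ ω) ω :=
  (measurable_from_prod_countable_left (f := fun q : Ω × ℕ => u q.2 q.1) hu).comp
    (measurable_id.prodMk hτ)

theorem exists_dist_lt_frequently_dist_lt {E : Type*} [PseudoMetricSpace E] {e : ℕ → E}
    (he : DenseRange e) {u : ℕ → E} {x : E} (hx : MapClusterPt x atTop u) {ε : ℝ} (hε : 0 < ε) :
    ∃ i, dist (e i) x < ε / 2 ∧ ∃ᶠ n in atTop, dist (u n) (e i) < ε := by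
  obtain ⟨i, hi⟩ := he.exists_dist_lt x (half_pos hε)
  refine ⟨i, by rwa [dist_comm], ?_⟩
  refine (Metric.nhds_basis_ball.mapClusterPt_iff_frequently.1 hx _ (half_pos hε)).mono
    fun n hn => ?_
  calc dist (u n) (e i) ≤ dist (u n) x + dist x (e i) := dist_triangle _ _ _
    _ < ε / 2 + ε / 2 := add_lt_add (Metric.mem_ball.1 hn) hi
    _ = ε := add_halves ε

variable {E : Type*} [MetricSpace E] [ProperSpace E] [MeasurableSpace E] [BorelSpace E]

theorem exists_measurable_mapClusterPt [Nonempty E] {f : ℕ → Ω → E}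
    (hf : ∀ n, Measurable (f n)) :
    ∃ F : Ω → E, Measurable F ∧
      ∀ ω, (∃ x, MapClusterPt x atTop (f · ω)) → MapClusterPt (F ω) atTop (f · ω) := by
  set e := TopologicalSpace.denseSeq E
  have he : DenseRange e := TopologicalSpace.denseRange_denseSeq E
  -- The `k`-th centre is visited infinitely often at distance `1 / 2 ^ k` and lies within
  -- `4 / 2 ^ k` of the previous one, so the centres converge to a cluster point.
  set p : Ω → ℕ → ℕ → ℕ → Prop := fun ω k j i =>
    (∃ᶠ n in atTop, dist (f n ω) (e i) < 1 / 2 ^ k) ∧ (k = 0 ∨ dist (e i) (e j) ≤ 4 / 2 ^ k)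
  set c : Ω → ℕ → E := fun ω k => e (leastSeq (p ω) (k + 1))
  have hp : ∀ k j i, Measurable (p · k j i) := by
    intro k j i
    simp only [p, frequently_atTop]
    fun_prop
  refine ⟨fun ω => limUnder atTop (c ω), ?_, ?_⟩
  · refine (StronglyMeasurable.limUnder fun k => ?_).measurable
    exact ((measurable_from_top (f := e)).comp (measurable_leastSeq hp (k + 1))).stronglyMeasurable
  rintro ω ⟨x, hx⟩
  have hex : ∀ k, ∃ i, p ω k (leastSeq (p ω) k) i := by
    intro k
    induction k with
    | zero =>
      obtain ⟨i, -, hi⟩ := exists_dist_lt_frequently_dist_lt he hx one_pos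
      exact ⟨i, by simpa using hi, Or.inl rfl⟩
    | succ k ih =>
      set j := leastSeq (p ω) (k + 1)
      obtain ⟨y, hy, hyc⟩ :=
        (isCompact_closedBall (e j) (1 / 2 ^ k)).exists_mapClusterPt_of_frequently
          ((leastSeq_spec ih).1.mono fun n hn => Metric.mem_closedBall.2 hn.le)
      obtain ⟨i, hiy, hi⟩ :=
        exists_dist_lt_frequently_dist_lt he hyc (by positivity : (0 : ℝ) < 1 / 2 ^ (k + 1))
      refine ⟨i, hi, Or.inr ?_⟩
      calc dist (e i) (e j) ≤ dist (e i) y + dist y (e j) := dist_triangle _ _ _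
        _ ≤ 1 / 2 ^ (k + 1) / 2 + 1 / 2 ^ k := add_le_add hiy.le (Metric.mem_closedBall.1 hy)
        _ ≤ 4 / 2 ^ (k + 1) := by rw [pow_succ]; field_simp; norm_num
  have hspec := fun k => leastSeq_spec (hex k)
  have hstep : ∀ k, dist (c ω k) (c ω (k + 1)) ≤ 4 / 2 / 2 ^ k := by
    intro k
    rw [dist_comm]
    calc _ ≤ 4 / 2 ^ (k + 1) := ((hspec (k + 1)).2.resolve_left k.succ_ne_zero)
      _ = 4 / 2 / 2 ^ k := by rw [pow_succ]; ring
  have hlim : Tendsto (c ω) atTop (𝓝 (limUnder atTop (c ω))) :=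
    (cauchySeq_of_le_geometric_two hstep).tendsto_limUnder
  refine Metric.nhds_basis_ball.mapClusterPt_iff_frequently.2 fun ε hε => ?_
  obtain ⟨k, hk⟩ :=
    exists_pow_lt_of_lt_one (by positivity : 0 < ε / 5) (by norm_num : (1 / 2 : ℝ) < 1)
  refine (hspec k).1.mono fun n hn => Metric.mem_ball.2 ?_
  calc dist (f n ω) (limUnder atTop (c ω))
        ≤ dist (f n ω) (c ω k) + dist (c ω k) (limUnder atTop (c ω)) := dist_triangle _ _ _
    _ < 1 / 2 ^ k + 4 / 2 ^ k :=
        add_lt_add_of_lt_of_le hn (dist_le_of_le_geometric_two_of_tendsto hstep hlim k)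
    _ = 5 * (1 / 2) ^ k := by rw [one_div_pow]; ring
    _ < ε := by linarith

theorem exists_measurable_strictMono_tendsto {f : ℕ → Ω → E} (hf : ∀ n, Measurable (f n))
    {F : Ω → E} (hF : Measurable F) :
    ∃ τ : ℕ → Ω → ℕ, (∀ k, Measurable (τ k)) ∧ ∀ ω, MapClusterPt (F ω) atTop (f · ω) →
      StrictMono (τ · ω) ∧ Tendsto (fun k => f (τ k ω) ω) atTop (𝓝 (F ω)) := by
  set p : Ω → ℕ → ℕ → ℕ → Prop := fun ω k j n => j < n ∧ dist (f n ω) (F ω) < 1 / 2 ^ k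
  have hp : ∀ k j n, Measurable (p · k j n) := fun k j n =>
    measurable_const.and (measurableSet_lt ((hf n).dist hF) measurable_const).mem
  refine ⟨fun k ω => leastSeq (p ω) (k + 1), fun k => measurable_leastSeq hp (k + 1), ?_⟩
  intro ω hω
  have hspec : ∀ k, p ω k (leastSeq (p ω) k) (leastSeq (p ω) (k + 1)) := fun k =>
    leastSeq_spec <| (Metric.nhds_basis_ball.mapClusterPt_iff_frequently.1 hω _
      (by positivity : (0 : ℝ) < 1 / 2 ^ k)).forall_exists_of_atTop _ |>.imp
        fun n hn => ⟨hn.1, Metric.mem_ball.1 hn.2⟩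
  refine ⟨strictMono_nat_of_lt_succ fun k => (hspec (k + 1)).1, ?_⟩
  refine tendsto_iff_dist_tendsto_zero.2 (squeeze_zero (fun _ => dist_nonneg)
    (fun k => (hspec k).2.le) ?_)
  simpa using tendsto_pow_atTop_nhds_zero_of_lt_one (by norm_num : (0 : ℝ) ≤ 1 / 2)
    (by norm_num : (1 / 2 : ℝ) < 1)

theorem exists_measurable_subseq_tendsto [Nonempty E] {f : ℕ → Ω → E}
    (hf : ∀ n, Measurable (f n)) :
    ∃ (τ : ℕ → Ω → ℕ) (F : Ω → E), (∀ k, Measurable (τ k)) ∧ Measurable F ∧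
      ∀ ω, (∃ x, MapClusterPt x atTop (f · ω)) →
        StrictMono (τ · ω) ∧ Tendsto (fun k => f (τ k ω) ω) atTop (𝓝 (F ω)) := by
  obtain ⟨F, hF, hFω⟩ := exists_measurable_mapClusterPt hf
  obtain ⟨τ, hτ, hτω⟩ := exists_measurable_strictMono_tendsto hf hF
  exact ⟨τ, F, hτ, hF, fun ω hω => hτω ω (hFω ω hω)⟩

theorem exists_mapClusterPt_of_not_tendsto_norm {V : Type*} [NormedAddCommGroup V]
    [ProperSpace V] {u : ℕ → V} (hu : ¬ Tendsto (fun n => ‖u n‖) atTop atTop) :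
    ∃ x, MapClusterPt x atTop u := by
  obtain ⟨C, hC⟩ : ∃ C, ∃ᶠ n in atTop, ‖u n‖ ≤ C := by
    simp only [tendsto_atTop, not_forall, Filter.not_eventually, not_le] at hu
    exact hu.imp fun C hC => hC.mono fun n hn => hn.le
  obtain ⟨x, -, hx⟩ := (isCompact_closedBall (0 : V) C).exists_mapClusterPt_of_frequently
    (hC.mono fun n hn => by simpa using hn)
  exact ⟨x, hx⟩

end RandomSubsequence

section Gains

variable {Ω : Type*} {d : ℕ}

/-- The gain over the periods `m + 1, …, m + N`; `H k` is the position held during period `k`,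
from time `k - 1` to time `k`. -/
def gain (S : ℕ → Ω → Fin d → ℝ) (m N : ℕ) (H : ℕ → Ω → Fin d → ℝ) (ω : Ω) : ℝ :=
  ∑ k ∈ Finset.range N, H (m + k + 1) ω ⬝ᵥ (S (m + k + 1) ω - S (m + k) ω)

variable {S : ℕ → Ω → Fin d → ℝ} {m N : ℕ} {H K : ℕ → Ω → Fin d → ℝ} {ω : Ω}

@[simp]
theorem gain_zero : gain S m 0 H ω = 0 := by
  simp [gain]

theorem gain_succ :
    gain S m (N + 1) H ω = H (m + 1) ω ⬝ᵥ (S (m + 1) ω - S m ω) + gain S (m + 1) N H ω := by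
  rw [gain, Finset.sum_range_succ', add_comm]
  congr 1
  refine Finset.sum_congr rfl fun k _ => ?_
  rw [show m + (k + 1) = m + 1 + k by ring]

theorem gain_update (h : Ω → Fin d → ℝ) :
    gain S m (N + 1) (Function.update H (m + 1) h) ω =
      h ω ⬝ᵥ (S (m + 1) ω - S m ω) + gain S (m + 1) N H ω := by
  rw [gain_succ, Function.update_self]
  congr 1
  refine Finset.sum_congr rfl fun k _ => ?_
  rw [Function.update_of_ne (by omega)]

theorem gain_add : gain S m N (H + K) ω = gain S m N H ω + gain S m N K ω := by
  simp only [gain, Pi.add_apply, add_dotProduct, Finset.sum_add_distrib]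

theorem gain_sub : gain S m N (H - K) ω = gain S m N H ω - gain S m N K ω := by
  simp only [gain, Pi.sub_apply, sub_dotProduct, Finset.sum_sub_distrib]

theorem gain_smul (c : Ω → ℝ) : gain S m N (fun k => c • H k) ω = c ω * gain S m N H ω := by
  simp only [gain, Pi.smul_apply', smul_dotProduct, smul_eq_mul, Finset.mul_sum]

theorem gain_indicator (A : Set Ω) :
    gain S m N (fun k => A.indicator (H k)) ω = A.indicator (gain S m N H) ω := by
  by_cases hω : ω ∈ A <;> simp [gain, hω]

theorem tendsto_gain_tail {G : ℕ → ℕ → Ω → Fin d → ℝ} {z : ℝ} {x : Fin d → ℝ}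
    (hz : Tendsto (fun n => gain S m (N + 1) (G n) ω) atTop (𝓝 z))
    (hx : Tendsto (fun n => G n (m + 1) ω) atTop (𝓝 x)) :
    Tendsto (fun n => gain S (m + 1) N (G n) ω) atTop
      (𝓝 (z - x ⬝ᵥ (S (m + 1) ω - S m ω))) := by
  have hdot : Tendsto (fun n => G n (m + 1) ω ⬝ᵥ (S (m + 1) ω - S m ω)) atTop
      (𝓝 (x ⬝ᵥ (S (m + 1) ω - S m ω))) :=
    ((continuous_id.dotProduct continuous_const).tendsto x).comp hx
  refine (hz.sub hdot).congr fun n => ?_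
  rw [gain_succ]
  ring

end Gains

section Strategies

variable {Ω : Type*} {m0 : MeasurableSpace Ω} {d : ℕ} (ℱ : Filtration ℕ m0)

def IsPredictableFrom (m : ℕ) (H : ℕ → Ω → Fin d → ℝ) : Prop :=
  ∀ k, m ≤ k → Measurable[ℱ k] (H (k + 1))

namespace IsPredictableFrom

variable {ℱ} {m : ℕ} {H K : ℕ → Ω → Fin d → ℝ}

theorem mono (hH : IsPredictableFrom ℱ m H) {m' : ℕ} (hm : m ≤ m') :
    IsPredictableFrom ℱ m' H :=
  fun k hk => hH k (hm.trans hk)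

theorem add (hH : IsPredictableFrom ℱ m H) (hK : IsPredictableFrom ℱ m K) :
    IsPredictableFrom ℱ m (H + K) :=
  fun k hk => (hH k hk).add (hK k hk)

theorem sub (hH : IsPredictableFrom ℱ m H) (hK : IsPredictableFrom ℱ m K) :
    IsPredictableFrom ℱ m (H - K) :=
  fun k hk => (hH k hk).sub (hK k hk)

theorem smul (hH : IsPredictableFrom ℱ m H) {c : Ω → ℝ} (hc : Measurable[ℱ m] c) :
    IsPredictableFrom ℱ m fun k => c • H k :=
  fun k hk => (hc.mono (ℱ.mono hk) le_rfl).smul (hH k hk)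

theorem indicator (hH : IsPredictableFrom ℱ m H) {A : Set Ω} (hA : MeasurableSet[ℱ m] A) :
    IsPredictableFrom ℱ m fun k => A.indicator (H k) :=
  fun k hk => (hH k hk).indicator (ℱ.mono hk _ hA)

theorem apply_index {G : ℕ → ℕ → Ω → Fin d → ℝ} (hG : ∀ n, IsPredictableFrom ℱ m (G n))
    {τ : Ω → ℕ} (hτ : Measurable[ℱ m] τ) : IsPredictableFrom ℱ m fun k ω => G (τ ω) k ω :=
  fun k hk => measurable_apply_index (fun n => hG n k hk) (hτ.mono (ℱ.mono hk) le_rfl)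

theorem update (hK : IsPredictableFrom ℱ (m + 1) K) {h : Ω → Fin d → ℝ}
    (hh : Measurable[ℱ m] h) : IsPredictableFrom ℱ m (Function.update K (m + 1) h) := by
  intro k hk
  rcases hk.eq_or_lt with rfl | hlt
  · simpa using hh
  · rw [Function.update_of_ne (by omega)]
    exact hK k hlt

end IsPredictableFrom

variable (P : Measure Ω) (S : ℕ → Ω → Fin d → ℝ)

def IsGain (m N : ℕ) (ζ : Ω → ℝ) : Prop :=
  ∃ H, IsPredictableFrom ℱ m H ∧ ζ =ᵐ[P] gain S m N H

theorem isGain_zero (m N : ℕ) : IsGain ℱ P S m N 0 :=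
  ⟨0, fun _ _ => measurable_const, ae_of_all _ fun _ => by simp [gain]⟩

namespace IsGain

variable {ℱ P S} {m N : ℕ} {ξ ζ : Ω → ℝ}

theorem congr (hξ : IsGain ℱ P S m N ξ) (h : ξ =ᵐ[P] ζ) : IsGain ℱ P S m N ζ :=
  hξ.imp fun _ hH => ⟨hH.1, h.symm.trans hH.2⟩

theorem add (hξ : IsGain ℱ P S m N ξ) (hζ : IsGain ℱ P S m N ζ) : IsGain ℱ P S m N (ξ + ζ) := by
  obtain ⟨H, hH, hHξ⟩ := hξ
  obtain ⟨K, hK, hKζ⟩ := hζ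
  refine ⟨H + K, hH.add hK, ?_⟩
  filter_upwards [hHξ, hKζ] with ω h₁ h₂
  rw [Pi.add_apply, gain_add, h₁, h₂]

theorem cons (hξ : IsGain ℱ P S (m + 1) N ξ) {h : Ω → Fin d → ℝ} (hh : Measurable[ℱ m] h) :
    IsGain ℱ P S m (N + 1) fun ω => h ω ⬝ᵥ (S (m + 1) ω - S m ω) + ξ ω := by
  obtain ⟨K, hK, hKξ⟩ := hξ
  refine ⟨Function.update K (m + 1) h, hK.update hh, ?_⟩
  filter_upwards [hKξ] with ω hω
  rw [gain_update, hω]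

end IsGain

theorem isGain_sum {m N : ℕ} {ι : Type*} (s : Finset ι) {ζ : ι → Ω → ℝ}
    (h : ∀ i ∈ s, IsGain ℱ P S m N (ζ i)) : IsGain ℱ P S m N (∑ i ∈ s, ζ i) :=
  Finset.sum_induction _ _ (fun _ _ => IsGain.add) (isGain_zero ℱ P S m N) h

/-- The induction on `s` lowers the number of assets traded in the first period `m + 1`. -/
def ClosedGainsOn (s : Finset (Fin d)) (m N : ℕ) : Prop :=
  ∀ (G : ℕ → ℕ → Ω → Fin d → ℝ) (ζ : Ω → ℝ), (∀ n, IsPredictableFrom ℱ m (G n)) →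
    (∀ n ω, ∀ j ∉ s, G n (m + 1) ω j = 0) →
    (∀ᵐ ω ∂P, Tendsto (fun n => gain S m N (G n) ω) atTop (𝓝 (ζ ω))) → IsGain ℱ P S m N ζ

variable {ℱ P S}

theorem ClosedGainsOn.isGain_indicator {s : Finset (Fin d)} {m N : ℕ}
    (h : ClosedGainsOn ℱ P S s m N) {A : Set Ω} (hA : MeasurableSet[ℱ m] A)
    {G : ℕ → ℕ → Ω → Fin d → ℝ} (hG : ∀ n, IsPredictableFrom ℱ m (G n))
    (hs : ∀ n, ∀ ω ∈ A, ∀ j ∉ s, G n (m + 1) ω j = 0) {ζ : Ω → ℝ}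
    (hζ : ∀ᵐ ω ∂P, ω ∈ A → Tendsto (fun n => gain S m N (G n) ω) atTop (𝓝 (ζ ω))) :
    IsGain ℱ P S m N (A.indicator ζ) := by
  refine h (fun n k => A.indicator (G n k)) _ (fun n => (hG n).indicator hA) ?_ ?_
  · intro n ω j hj
    by_cases hω : ω ∈ A
    · simp [hω, hs n ω hω j hj]
    · simp [hω]
  · filter_upwards [hζ] with ω hω
    simp only [gain_indicator]
    by_cases hωA : ω ∈ A
    · simpa [hωA] using hω hωA
    · simp [hωA]

theorem closedGainsOn_zero (s : Finset (Fin d)) (m : ℕ) : ClosedGainsOn ℱ P S s m 0 := by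
  intro G ζ _ _ hζ
  refine (isGain_zero ℱ P S m 0).congr ?_
  filter_upwards [hζ] with ω hω
  simpa using hω

end Strategies

section Closedness

variable {Ω : Type*} {m0 : MeasurableSpace Ω} {d : ℕ} {ℱ : Filtration ℕ m0} {P : Measure Ω}
  {S : ℕ → Ω → Fin d → ℝ} {m N : ℕ} {G : ℕ → ℕ → Ω → Fin d → ℝ} {ζ : Ω → ℝ}

theorem measurableSet_tendsto_norm_atTop (hG : ∀ n, IsPredictableFrom ℱ m (G n)) :
    MeasurableSet[ℱ m] {ω | Tendsto (fun n => ‖G n (m + 1) ω‖) atTop atTop} :=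
  measurableSet_tendsto _ fun n => measurable_norm.comp (hG n m le_rfl)

theorem isGain_indicator_not_tendsto_norm (IH : ClosedGainsOn ℱ P S Finset.univ (m + 1) N)
    (hG : ∀ n, IsPredictableFrom ℱ m (G n))
    (hζ : ∀ᵐ ω ∂P, Tendsto (fun n => gain S m (N + 1) (G n) ω) atTop (𝓝 (ζ ω))) :
    IsGain ℱ P S m (N + 1) ({ω | Tendsto (fun n => ‖G n (m + 1) ω‖) atTop atTop}ᶜ.indicator ζ) := by
  set B := {ω | Tendsto (fun n => ‖G n (m + 1) ω‖) atTop atTop}ᶜ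
  have hB : MeasurableSet[ℱ m] B := (measurableSet_tendsto_norm_atTop hG).compl
  obtain ⟨τ, F, hτ, hF, hτF⟩ :=
    exists_measurable_subseq_tendsto (mΩ := ℱ m) (f := fun n => G n (m + 1))
      fun n => hG n m le_rfl
  have htail : IsGain ℱ P S (m + 1) N
      (B.indicator fun ω => ζ ω - F ω ⬝ᵥ (S (m + 1) ω - S m ω)) := by
    refine IH.isGain_indicator (ℱ.mono m.le_succ _ hB)
      (fun n => ((IsPredictableFrom.apply_index hG (hτ n)).mono m.le_succ))
      (fun _ _ _ j hj => absurd (Finset.mem_univ j) hj) ?_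
    filter_upwards [hζ] with ω hω hωB
    obtain ⟨hmono, hlim⟩ := hτF ω (exists_mapClusterPt_of_not_tendsto_norm hωB)
    exact tendsto_gain_tail (hω.comp hmono.tendsto_atTop) hlim
  convert htail.cons (hF.indicator hB) using 1
  funext ω
  by_cases hω : ω ∈ B <;> simp [hω]

theorem exists_null_strategy (IH : ClosedGainsOn ℱ P S Finset.univ (m + 1) N)
    {s : Finset (Fin d)} (hG : ∀ n, IsPredictableFrom ℱ m (G n))
    (hs : ∀ n ω, ∀ j ∉ s, G n (m + 1) ω j = 0)
    (hζ : ∀ᵐ ω ∂P, Tendsto (fun n => gain S m (N + 1) (G n) ω) atTop (𝓝 (ζ ω))) :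
    ∃ Z, IsPredictableFrom ℱ m Z ∧ (∀ᵐ ω ∂P, gain S m (N + 1) Z ω = 0) ∧
      (∀ ω, Z (m + 1) ω ≠ 0 ↔ Tendsto (fun n => ‖G n (m + 1) ω‖) atTop atTop) ∧
      ∀ ω, ∀ j ∉ s, Z (m + 1) ω j = 0 := by
  set U := {ω | Tendsto (fun n => ‖G n (m + 1) ω‖) atTop atTop}
  have hU : MeasurableSet[ℱ m] U := measurableSet_tendsto_norm_atTop hG
  set a : ℕ → Ω → ℝ := fun n ω => ‖G n (m + 1) ω‖⁻¹
  have ha : ∀ n, Measurable[ℱ m] (a n) := fun n => (measurable_norm.comp (hG n m le_rfl)).inv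
  have hnorm : ∀ n ω, G n (m + 1) ω ≠ 0 → ‖a n ω • G n (m + 1) ω‖ = 1 := fun n ω h0 => by
    simpa using norm_smul_inv_norm (𝕜 := ℝ) h0
  have hbdd : ∀ n ω, ‖a n ω • G n (m + 1) ω‖ ≤ 1 := fun n ω => by
    by_cases h0 : G n (m + 1) ω = 0
    · simp [h0]
    · exact (hnorm n ω h0).le
  obtain ⟨τ, F, hτ, hF, hτF⟩ := exists_measurable_subseq_tendsto (mΩ := ℱ m)
    (f := fun n ω => a n ω • G n (m + 1) ω) fun n => (ha n).smul (hG n m le_rfl)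
  have hconv : ∀ ω, StrictMono (τ · ω) ∧
      Tendsto (fun k => a (τ k ω) ω • G (τ k ω) (m + 1) ω) atTop (𝓝 (F ω)) := fun ω =>
    hτF ω <| ((isCompact_closedBall (0 : Fin d → ℝ) 1).exists_mapClusterPt_of_frequently
      (Frequently.of_forall fun n => by simpa using hbdd n ω)).imp fun _ hx => hx.2
  have hFnorm : ∀ ω ∈ U, ‖F ω‖ = 1 := by
    intro ω hω
    refine tendsto_nhds_unique (hconv ω).2.norm (tendsto_const_nhds.congr' ?_)
    filter_upwards [(hconv ω).1.tendsto_atTop.eventually (hω.eventually_gt_atTop 0)] with k hk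
    exact (hnorm _ ω (norm_pos_iff.1 hk)).symm
  have hFs : ∀ ω, ∀ j ∉ s, F ω j = 0 := fun ω j hj =>
    tendsto_nhds_unique (((continuous_apply j).tendsto _).comp (hconv ω).2) <| by
      simpa only [Function.comp_def, Pi.smul_apply, hs _ ω j hj, smul_zero] using tendsto_const_nhds
  have htail : IsGain ℱ P S (m + 1) N
      (U.indicator fun ω => -(F ω ⬝ᵥ (S (m + 1) ω - S m ω))) := by
    refine IH.isGain_indicator (ℱ.mono m.le_succ _ hU)
      (G := fun n k ω => a (τ n ω) ω • G (τ n ω) k ω)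
      (fun n => (IsPredictableFrom.apply_index (G := fun n k => a n • G n k)
        (fun n => (hG n).smul (ha n)) (hτ n)).mono m.le_succ)
      (fun _ _ _ j hj => absurd (Finset.mem_univ j) hj) ?_
    filter_upwards [hζ] with ω hω hωU
    have hmono := (hconv ω).1.tendsto_atTop
    have ha0 : Tendsto (fun n => a (τ n ω) ω) atTop (𝓝 0) := hωU.inv_tendsto_atTop.comp hmono
    have hgain : Tendsto (fun n => gain S m (N + 1) (fun k ω => a (τ n ω) ω • G (τ n ω) k ω) ω)
        atTop (𝓝 0) := by
      have h := ha0.mul (hω.comp hmono)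
      rw [zero_mul] at h
      exact h.congr fun n => (gain_smul (a (τ n ω))).symm
    simpa using tendsto_gain_tail hgain (hconv ω).2
  obtain ⟨K, hK, hKe⟩ := htail
  refine ⟨Function.update K (m + 1) (U.indicator F), hK.update (hF.indicator hU), ?_, ?_, ?_⟩
  · filter_upwards [hKe] with ω hω
    rw [gain_update, ← hω]
    by_cases hωU : ω ∈ U <;> simp [hωU]
  · intro ω
    rw [Function.update_self]
    by_cases hωU : ω ∈ U
    · rw [Set.indicator_of_mem hωU, ← norm_ne_zero_iff, hFnorm ω hωU]
      exact iff_of_true one_ne_zero hωU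
    · rw [Set.indicator_of_notMem hωU]
      exact iff_of_false (not_not.2 rfl) hωU
  · intro ω j hj
    by_cases hωU : ω ∈ U <;> simp [hωU, hFs ω j hj]

theorem ClosedGainsOn.isGain_indicator_erase {s : Finset (Fin d)} {i : Fin d}
    (h : ClosedGainsOn ℱ P S (s.erase i) m N) {Z : ℕ → Ω → Fin d → ℝ}
    (hZ : IsPredictableFrom ℱ m Z) (hZ0 : ∀ᵐ ω ∂P, gain S m N Z ω = 0)
    (hZs : ∀ ω, ∀ j ∉ s, Z (m + 1) ω j = 0) {A : Set Ω} (hA : MeasurableSet[ℱ m] A)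
    (hAZ : ∀ ω ∈ A, Z (m + 1) ω i ≠ 0) (hG : ∀ n, IsPredictableFrom ℱ m (G n))
    (hs : ∀ n ω, ∀ j ∉ s, G n (m + 1) ω j = 0)
    (hζ : ∀ᵐ ω ∂P, Tendsto (fun n => gain S m N (G n) ω) atTop (𝓝 (ζ ω))) :
    IsGain ℱ P S m N (A.indicator ζ) := by
  -- subtracting `c n • Z` does not change the gain and clears asset `i` in period `m + 1`
  set c : ℕ → Ω → ℝ := fun n ω => G n (m + 1) ω i / Z (m + 1) ω i
  have hc : ∀ n, Measurable[ℱ m] (c n) := fun n =>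
    ((measurable_pi_apply i).comp (hG n m le_rfl)).div ((measurable_pi_apply i).comp (hZ m le_rfl))
  refine h.isGain_indicator hA (G := fun n => G n - fun k => c n • Z k)
    (fun n => (hG n).sub (hZ.smul (hc n))) ?_ ?_
  · intro n ω hω j hj
    simp only [Pi.sub_apply, Pi.smul_apply', Pi.smul_apply, smul_eq_mul]
    rcases eq_or_ne j i with rfl | hji
    · simp [c, hAZ ω hω]
    · have hjs : j ∉ s := fun hjs => hj (Finset.mem_erase.2 ⟨hji, hjs⟩)
      simp [hs n ω j hjs, hZs ω j hjs]
  · filter_upwards [hζ, hZ0] with ω hω hω0 _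
    simpa [gain_sub, gain_smul, hω0] using hω

theorem closedGainsOn_succ (IH : ∀ m, ClosedGainsOn ℱ P S Finset.univ m N) (s : Finset (Fin d))
    (m : ℕ) : ClosedGainsOn ℱ P S s m (N + 1) := by
  induction s using Finset.strongInduction with
  | H s ihs =>
  intro G ζ hG hs hζ
  obtain ⟨Z, hZ, hZ0, hZU, hZs⟩ := exists_null_strategy (IH (m + 1)) hG hs hζ
  set U := {ω | Tendsto (fun n => ‖G n (m + 1) ω‖) atTop atTop}
  set A := disjointed fun i => {ω | Z (m + 1) ω i ≠ 0}
  have hA : ∀ i, MeasurableSet[ℱ m] (A i) := by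
    have hZi : ∀ i, MeasurableSet[ℱ m] {ω | Z (m + 1) ω i ≠ 0} := fun i =>
      (measurableSet_singleton 0).compl.preimage ((measurable_pi_apply i).comp (hZ m le_rfl))
    exact fun i => disjointedRec (fun _ j ht => ht.diff (hZi j)) (hZi i)
  have hpiece : ∀ i, IsGain ℱ P S m (N + 1) ((A i).indicator ζ) := by
    intro i
    by_cases hi : i ∈ s
    · exact (ihs _ (Finset.erase_ssubset hi)).isGain_indicator_erase hZ hZ0 hZs (hA i)
        (fun ω hω => disjointed_subset _ _ hω) hG hs hζ
    · have : A i = ∅ := Set.eq_empty_of_forall_notMem fun ω hω =>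
        disjointed_subset _ _ hω (hZs ω i hi)
      rw [this, Set.indicator_empty']
      exact isGain_zero ℱ P S m (N + 1)
  have hU : U = ⋃ i, A i := by
    rw [iUnion_disjointed]
    ext ω
    rw [Set.mem_iUnion]
    exact (hZU ω).symm.trans Function.ne_iff
  have hUζ : IsGain ℱ P S m (N + 1) (U.indicator ζ) := by
    have h := Finset.indicator_biUnion Finset.univ A (f := ζ)
      fun i _ j _ hij => disjoint_disjointed _ hij
    simp only [Finset.mem_univ, Set.iUnion_true] at h
    rw [hU, h]
    convert isGain_sum ℱ P S Finset.univ fun i _ => hpiece i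
    simp [Finset.sum_apply]
  rw [← Set.indicator_compl_add_self U ζ]
  exact (isGain_indicator_not_tendsto_norm (IH (m + 1)) hG hζ).add hUζ

theorem closedGainsOn_univ (N m : ℕ) : ClosedGainsOn ℱ P S Finset.univ m N := by
  induction N generalizing m with
  | zero => exact closedGainsOn_zero _ m
  | succ N ih => exact closedGainsOn_succ ih _ m

end Closedness

theorem stmt16_general
    {Ω : Type*} {m0 : MeasurableSpace Ω} (ℱ : Filtration ℕ m0)
    (P : Measure Ω)
    (d N : ℕ)
    (S : ℕ → Ω → Fin d → ℝ)
    (Hs : ℕ → ℕ → Ω → Fin d → ℝ)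
    (hHs : ∀ n : ℕ, ∀ k : ℕ, StronglyMeasurable[ℱ k] (Hs n (k + 1)))
    (ζ : Ω → ℝ)
    (htend : TendstoInMeasure P
      (fun n ω => ∑ k ∈ Finset.range N, ∑ j, Hs n (k + 1) ω j * (S (k + 1) ω j - S k ω j))
      Filter.atTop ζ) :
    ∃ H : ℕ → Ω → Fin d → ℝ,
      (∀ k : ℕ, StronglyMeasurable[ℱ k] (H (k + 1))) ∧
      ∀ᵐ ω ∂P,
        ζ ω = ∑ k ∈ Finset.range N, ∑ j, H (k + 1) ω j * (S (k + 1) ω j - S k ω j) := by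
  have hgain : ∀ H ω, gain S 0 N H ω =
      ∑ k ∈ Finset.range N, ∑ j, H (k + 1) ω j * (S (k + 1) ω j - S k ω j) := fun H ω => by
    simp [gain, dotProduct]
  obtain ⟨ns, -, hns⟩ := htend.exists_seq_tendsto_ae
  obtain ⟨H, hH, hHζ⟩ := closedGainsOn_univ (P := P) (S := S) N 0 (fun n => Hs (ns n)) ζ
    (fun n k _ => (hHs (ns n) k).measurable) (fun _ _ j hj => absurd (Finset.mem_univ j) hj)
    (by simpa only [hgain] using hns)
  refine ⟨H, fun k => (hH k k.zero_le).stronglyMeasurable, ?_⟩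
  filter_upwards [hHζ] with ω hω
  rw [hω, hgain]

/-- The set of outcomes `∑_{k=1}^N ⟨H_k, S_k - S_{k-1}⟩` of discrete-time
stochastic integrals against an adapted `ℝ^d`-valued process `S` admitting an equivalent
martingale measure is closed under convergence in probability: any limit in probability of
such outcomes is itself (a.e. equal to) such an outcome. -/
theorem stmt16
    {Ω : Type*} {m0 : MeasurableSpace Ω} (ℱ : Filtration ℕ m0)
    (P : Measure Ω) [IsProbabilityMeasure P]
    (d N : ℕ)
    (S : ℕ → Ω → Fin d → ℝ)
    (hadapted : ∀ j, Adapted ℱ (fun n ω => S n ω j))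
    (hEMM : ∃ Q : Measure Ω, IsProbabilityMeasure Q ∧ Q ≪ P ∧ P ≪ Q ∧
      ∀ j, Martingale (fun n ω => S n ω j) ℱ Q)
    (Hs : ℕ → ℕ → Ω → Fin d → ℝ)
    (hHs : ∀ n : ℕ, ∀ k : ℕ, StronglyMeasurable[ℱ k] (Hs n (k + 1)))
    (ζ : Ω → ℝ) (hζmeas : Measurable ζ)
    (htend : TendstoInMeasure P
      (fun n ω => ∑ k ∈ Finset.range N, ∑ j, Hs n (k + 1) ω j * (S (k + 1) ω j - S k ω j))
      Filter.atTop ζ) :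
    ∃ H : ℕ → Ω → Fin d → ℝ,
      (∀ k : ℕ, StronglyMeasurable[ℱ k] (H (k + 1))) ∧
      ∀ᵐ ω ∂P,
        ζ ω = ∑ k ∈ Finset.range N, ∑ j, H (k + 1) ω j * (S (k + 1) ω j - S k ω j) :=
  stmt16_general ℱ P d N S Hs hHs ζ htend
end
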